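/- Let $n \geq 3$ and $w = (b^{n-1}a)^{n-1}(ab)^{n-1}a^2$ over $\{a,b\}$. If $p_1 \cdot a^2b^2 \cdot q_1 = w^{k}$ and $p_2 \cdot a^2b^2 \cdot q_2 = w^{\ell}$ for words $p_i, q_i$ and integers $k, \ell \geq 0$, then $|p_1| \equiv |p_2| \pmod{n^2+n}$. -/
import Mathlib

/-- `k`-fold concatenation of a word. -/
def wpow {A : Type*} (u : List A) (k : ℕ) : List A := (List.replicate k u).flatten

lemma wpow_succ {A : Type*} (u : List A) (k : ℕ) : wpow u (k+1) = u ++ wpow u k := by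
  simp [wpow, List.replicate_succ]

lemma length_wpow {A : Type*} (u : List A) (k : ℕ) : (wpow u k).length = k * u.length := by
  induction k with
  | zero => simp [wpow]
  | succ k ih => rw [wpow_succ]; simp [ih]; ring

lemma getElem_wpow {A : Type*} (u : List A) (hu : 0 < u.length) (k i : ℕ) (h : i < k * u.length) :
    (wpow u k)[i]'(by rw [length_wpow]; exact h) =
    u[i % u.length]'(Nat.mod_lt _ hu) := by
  induction k generalizing i with
  | zero => omega
  | succ k ih =>
    rw [List.getElem_of_eq (wpow_succ u k)]
    by_cases hi : i < u.length
    · rw [List.getElem_append_left hi]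
      congr 1
      exact (Nat.mod_eq_of_lt hi).symm
    · push_neg at hi
      have h2 : i - u.length < k * u.length := by
        have hs : (k+1) * u.length = k*u.length + u.length := by ring
        omega
      rw [List.getElem_append_right (by omega)]
      · rw [ih _ h2]
        congr 1
        conv_rhs => rw [show i = i - u.length + u.length by omega]
        rw [Nat.add_mod_right]

lemma wpow_single {A : Type*} (x : A) (m : ℕ) : wpow [x] m = List.replicate m x := by
  induction m with
  | zero => rfl
  | succ m ih => rw [wpow_succ, ih]; simp [List.replicate_succ]

lemma w_elem {A : Type*} (a b : A) (m : ℕ) (hm : 2 ≤ m) (j : ℕ)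
    (hlen : j < (wpow (wpow [b] m ++ [a]) m ++ wpow [a,b] m ++ [a,a]).length) :
    (wpow (wpow [b] m ++ [a]) m ++ wpow [a,b] m ++ [a,a])[j] =
      if j < m*(m+1) then (if j % (m+1) = m then a else b)
      else if j < m*(m+1)+2*m then (if (j - m*(m+1)) % 2 = 0 then a else b) else a := by
  have hblock : (wpow [b] m ++ [a]).length = m+1 := by simp [length_wpow]
  have hA : (wpow (wpow [b] m ++ [a]) m).length = m*(m+1) := by rw [length_wpow, hblock]
  have hB : (wpow [a,b] m).length = 2*m := by simp [length_wpow]; ring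
  have hlen' : j < m*(m+1) + 2*m + 2 := by
    simp only [List.length_append, hA, hB, List.length_cons, List.length_nil] at hlen; omega
  by_cases h1 : j < m*(m+1)
  · rw [List.getElem_append_left (by simp only [List.length_append, hA, hB, hblock, length_wpow, List.length_cons, List.length_nil, List.length_singleton]; omega)]
    rw [List.getElem_append_left (hA ▸ h1)]
    rw [getElem_wpow _ (by simp only [List.length_append, hA, hB, hblock, length_wpow, List.length_cons, List.length_nil, List.length_singleton]; omega) m j (by simp only [List.length_append, hA, hB, hblock, length_wpow, List.length_cons, List.length_nil, List.length_singleton]; omega)]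
    simp only [hblock]
    have hslt : j % (m+1) < m+1 := Nat.mod_lt _ (by omega)
    by_cases h2 : j % (m+1) = m
    · rw [if_pos h1, if_pos h2]
      rw [List.getElem_append_right (by simp only [List.length_append, hA, hB, hblock, length_wpow, List.length_cons, List.length_nil, List.length_singleton]; omega)]
      simp [h2, length_wpow]
    · rw [if_pos h1, if_neg h2]
      rw [List.getElem_append_left (by simp only [List.length_append, hA, hB, hblock, length_wpow, List.length_cons, List.length_nil, List.length_singleton]; omega)]
      simp [wpow_single]
  · push_neg at h1
    by_cases h2 : j < m*(m+1)+2*m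
    · rw [List.getElem_append_left (by simp only [List.length_append, hA, hB]; omega)]
      rw [List.getElem_append_right (by simp only [List.length_append, hA, hB, hblock, length_wpow, List.length_cons, List.length_nil, List.length_singleton]; omega)]
      simp only [hA]
      rw [getElem_wpow _ (by simp) m (j - m*(m+1)) (by simp only [List.length_cons, List.length_nil]; omega)]
      rw [if_neg (by omega), if_pos h2]
      rcases Nat.mod_two_eq_zero_or_one (j - m*(m+1)) with hp | hp
      · simp [hp]
      · simp [hp]
    · rw [List.getElem_append_right (by simp only [List.length_append, hA, hB]; omega)]
      rw [if_neg (by omega), if_neg h2]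
      simp only [List.length_append, hA, hB]
      have : j - (m*(m+1) + 2*m) = 0 ∨ j - (m*(m+1) + 2*m) = 1 := by omega
      rcases this with h3 | h3 <;> simp [h3]

lemma occ_letter {A : Type*} (W : List A) (hW : 0 < W.length) (p s q : List A) (k : ℕ)
    (h : p ++ s ++ q = wpow W k) (t : ℕ) (ht : t < s.length) :
    W[(p.length + t) % W.length]'(Nat.mod_lt _ hW) = s[t] := by
  have hlen : p.length + s.length + q.length = k * W.length := by
    have := congrArg List.length h
    simp only [List.length_append, length_wpow] at this
    omega
  have hb : p.length + t < k * W.length := by omega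
  rw [← getElem_wpow W hW k _ hb]
  rw [List.getElem_of_eq h.symm]
  rw [List.getElem_append_left (by simp only [List.length_append]; omega)]
  rw [List.getElem_append_right (by omega)]
  congr 1
  omega

lemma key {A : Type*} (a b : A) (hab : a ≠ b) (m : ℕ) (hm : 2 ≤ m)
    (p q : List A) (k : ℕ)
    (h : p ++ [a,a,b,b] ++ q = wpow (wpow (wpow [b] m ++ [a]) m ++ wpow [a,b] m ++ [a,a]) k) :
    p.length % (m*(m+1)+2*m+2) = m*(m+1)+2*m := by
  have hE6 : 6 ≤ m*(m+1) := by nlinarith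
  have hWlen : (wpow (wpow [b] m ++ [a]) m ++ wpow [a,b] m ++ [a,a]).length
      = m*(m+1)+2*m+2 := by
    simp only [List.length_append, length_wpow, List.length_cons, List.length_nil]
    ring
  have hW : 0 < (wpow (wpow [b] m ++ [a]) m ++ wpow [a,b] m ++ [a,a]).length := by omega
  have e0 := occ_letter _ hW p [a,a,b,b] q k h 0 (by norm_num)
  have e1 := occ_letter _ hW p [a,a,b,b] q k h 1 (by norm_num)
  have e2 := occ_letter _ hW p [a,a,b,b] q k h 2 (by norm_num)
  have e3 := occ_letter _ hW p [a,a,b,b] q k h 3 (by norm_num)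
  rw [w_elem a b m hm] at e0 e1 e2 e3
  simp only [hWlen, Nat.add_zero, List.getElem_cons_zero, List.getElem_cons_succ] at e0 e1 e2 e3
  set L := m*(m+1)+2*m+2 with hL
  set E := m*(m+1) with hEdef
  have hmod : ∀ t : ℕ, (p.length + t) % L = (p.length % L + t) % L := by
    intro t
    exact (Nat.mod_modEq p.length L).symm.add_right t
  set r := p.length % L with hrdef
  have hr : r < L := Nat.mod_lt _ (by omega)
  by_cases hc : r = E + 2*m
  · exact hc
  exfalso
  rcases Nat.lt_or_ge r (E + 2*m) with hlt | hge
  · -- r < E + 2m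
    rcases Nat.lt_or_ge (r+2) E with h2A | h2B
    · -- positions r, r+1 in A
      have i1 : (p.length + 1) % L = r + 1 := by rw [hmod 1]; exact Nat.mod_eq_of_lt (by omega)
      rw [if_pos (by omega)] at e0
      rw [i1, if_pos (by omega)] at e1
      by_cases x0 : r % (m+1) = m
      · by_cases x1 : (r+1) % (m+1) = m
        · have hfin : (r+1) % (m+1) = 0 := by
            have h1m : 1 % (m+1) = 1 := Nat.mod_eq_of_lt (by omega)
            rw [Nat.add_mod, x0, h1m, Nat.mod_self]
          omega
        · rw [if_neg x1] at e1; exact hab e1.symm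
      · rw [if_neg x0] at e0; exact hab e0.symm
    · rcases Nat.lt_or_ge (r+3) (E + 2*m) with h3B | h3C
      · -- r+2, r+3 both in B (or r+2 = E+2m impossible since r+3 < E+2m... r+2 < r+3)
        have i2 : (p.length + 2) % L = r + 2 := by rw [hmod 2]; exact Nat.mod_eq_of_lt (by omega)
        have i3 : (p.length + 3) % L = r + 3 := by rw [hmod 3]; exact Nat.mod_eq_of_lt (by omega)
        rw [i2, if_neg (by omega), if_pos (by omega)] at e2
        rw [i3, if_neg (by omega), if_pos (by omega)] at e3
        by_cases p2 : (r + 2 - E) % 2 = 0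
        · rw [if_pos p2] at e2; exact hab e2
        by_cases p3 : (r + 3 - E) % 2 = 0
        · rw [if_pos p3] at e3; exact hab e3
        omega
      · -- r+3 ≥ E+2m, with r < E+2m: so r+3 ∈ {E+2m, E+2m+1}; r ≥ E since r+3 ≥ E+2m, 2m≥4
        rcases Nat.lt_or_ge (r+2) (E+2*m) with h2lt | h2ge
        · -- r+3 = E+2m or E+2m+1 with r+2 < E+2m: r+3 in C region
          have i3 : (p.length + 3) % L = r + 3 := by rw [hmod 3]; exact Nat.mod_eq_of_lt (by omega)
          rw [i3, if_neg (by omega), if_neg (by omega)] at e3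
          exact hab e3
        · -- r+2 ≥ E+2m: r+2 = E+2m or E+2m+1, but r < E+2m so r+2 ≤ E+2m+1
          rcases Nat.lt_or_ge (r+2) L with h2L | h2ge2
          · have i2 : (p.length + 2) % L = r + 2 := by rw [hmod 2]; exact Nat.mod_eq_of_lt (by omega)
            rw [i2, if_neg (by omega), if_neg (by omega)] at e2
            exact hab e2
          · -- r+2 ≥ L: impossible since r < E+2m = L-2
            omega
  · -- r ≥ E+2m, r ≠ E+2m, r < L: r = E+2m+1 = L-1
    have hr1 : r = E + 2*m + 1 := by omega
    have i1 : (p.length + 1) % L = 0 := by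
      rw [hmod 1, hr1]
      have : E + 2*m + 1 + 1 = L := by omega
      rw [this, Nat.mod_self]
    rw [i1, if_pos (by omega), if_neg (by simp only [Nat.zero_mod]; omega)] at e1
    exact hab e1.symm


theorem stmt9 {A : Type*} (a b : A) (hab : a ≠ b) (n : ℕ) (hn : 3 ≤ n)
    (w : List A)
    (hw : w = wpow (wpow [b] (n - 1) ++ [a]) (n - 1) ++ wpow [a, b] (n - 1) ++ [a, a])
    (p₁ q₁ p₂ q₂ : List A) (k l : ℕ)
    (h₁ : p₁ ++ [a, a, b, b] ++ q₁ = wpow w k)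
    (h₂ : p₂ ++ [a, a, b, b] ++ q₂ = wpow w l) :
    p₁.length ≡ p₂.length [MOD n ^ 2 + n] := by
  subst hw
  obtain ⟨m, rfl⟩ : ∃ m, n = m + 1 := ⟨n - 1, by omega⟩
  simp only [Nat.add_sub_cancel] at h₁ h₂
  have hm : 2 ≤ m := by omega
  have k1 := key a b hab m hm p₁ q₁ k h₁
  have k2 := key a b hab m hm p₂ q₂ l h₂
  have hLeq : m*(m+1)+2*m+2 = (m+1)^2+(m+1) := by ring
  show p₁.length % ((m+1)^2 + (m+1)) = p₂.length % ((m+1)^2 + (m+1))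
  rw [← hLeq, k1, k2]
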